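/- arXiv:1105.3993 — 3 statements merged into one kernel-verified Lean document; each statement's English description precedes it below -/
import Mathlib

section
/- Let A, B ∈ ℝ^{n×n}, with det B > 0 and ‖B‖ⁿ ≤ Q · det B for the operator norm ‖·‖ and some Q ≥ 1. Then |A·B| ≥ Q^{-1} · |A| · |B| / n², where |·| denotes the Frobenius norm. -/
open Matrix MeasureTheory

noncomputable def msqrt {n : ℕ} (A : Matrix (Fin n) (Fin n) ℝ) : Matrix (Fin n) (Fin n) ℝ :=
  let hA := (Matrix.posSemidef_conjTranspose_mul_self A).1
  (hA.eigenvectorUnitary : Matrix (Fin n) (Fin n) ℝ) * diagonal ((fun x : ℝ => √x) ∘ hA.eigenvalues) *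
    (star hA.eigenvectorUnitary : Matrix (Fin n) (Fin n) ℝ)

noncomputable def frobNorm {n : ℕ} (A : Matrix (Fin n) (Fin n) ℝ) : ℝ :=
  Real.sqrt (∑ i, ∑ j, (A i j) ^ 2)

noncomputable def opNorm {n : ℕ} (A : Matrix (Fin n) (Fin n) ℝ) : ℝ :=
  ‖Matrix.toEuclideanCLM (𝕜 := ℝ) A‖

noncomputable def sLam {n : ℕ} (A : Matrix (Fin n) (Fin n) ℝ) : ℝ :=
  sInf {y | ∃ v : EuclideanSpace ℝ (Fin n), ‖v‖ = 1 ∧ y = ‖Matrix.toEuclideanCLM (𝕜 := ℝ) A v‖}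

/-
Write σ = ‖B‖. The eigenvalues of B Bᵀ lie in [0, σ²] and multiply to (det B)², so each of them
is at least (det B)² / σ^(2(n-1)) ≥ (σ / Q)², using σⁿ ≤ Q det B. The rows of A B are the rows `a`
of A mapped by Bᵀ, and |Bᵀ a|² = a ⬝ B Bᵀ a ≥ (σ / Q)² |a|², whence σ |A| ≤ Q |A B|. On the other
side |B| ≤ √n σ, because every column of B has length at most σ.
-/

lemma Finset.prod_le_mul_pow_card_sub_one {ι : Type*} [Fintype ι] {f : ι → ℝ} {c : ℝ}
    (hf₀ : ∀ j, 0 ≤ f j) (hfc : ∀ j, f j ≤ c) (i : ι) :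
    ∏ j, f j ≤ f i * c ^ (Fintype.card ι - 1) := by
  classical
  rw [← Finset.mul_prod_erase _ _ (Finset.mem_univ i)]
  refine mul_le_mul_of_nonneg_left ?_ (hf₀ i)
  calc ∏ j ∈ Finset.univ.erase i, f j ≤ ∏ _j ∈ Finset.univ.erase i, c :=
        Finset.prod_le_prod (fun j _ ↦ hf₀ j) fun j _ ↦ hfc j
    _ = c ^ (Fintype.card ι - 1) := by simp [Finset.card_erase_of_mem]

lemma Matrix.IsHermitian.mul_dotProduct_self_le_dotProduct_mulVec {ι : Type*} [Fintype ι]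
    [DecidableEq ι] {M : Matrix ι ι ℝ} (hM : M.IsHermitian) {t : ℝ}
    (ht : ∀ i, t ≤ hM.eigenvalues i) (x : ι → ℝ) :
    t * (x ⬝ᵥ x) ≤ x ⬝ᵥ (M *ᵥ x) := by
  set U : Matrix ι ι ℝ := (hM.eigenvectorUnitary : Matrix ι ι ℝ)
  have hU : U * star U = 1 := Unitary.mul_star_self_of_mem hM.eigenvectorUnitary.2
  have hshift : M - t • 1 = U * diagonal (fun i ↦ hM.eigenvalues i - t) * Uᴴ := by
    conv_lhs => rw [hM.spectral_theorem, Unitary.conjStarAlgAut_apply, ← hU]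
    rw [← diagonal_sub, mul_sub, sub_mul, star_eq_conjTranspose, ← smul_one_eq_diagonal,
      mul_smul_comm, smul_mul_assoc, mul_one]
    rfl
  have hpsd : (M - t • 1).PosSemidef := hshift ▸
    (PosSemidef.diagonal fun i ↦ sub_nonneg.2 (ht i)).mul_mul_conjTranspose_same U
  have := hpsd.dotProduct_mulVec_nonneg x
  simp only [star_trivial, sub_mulVec, smul_mulVec, one_mulVec, dotProduct_sub,
    dotProduct_smul, smul_eq_mul] at this
  linarith

lemma norm_toLp_sq {ι : Type*} [Fintype ι] (x : ι → ℝ) :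
    ‖(WithLp.toLp 2 x : EuclideanSpace ℝ ι)‖ ^ 2 = x ⬝ᵥ x := by
  rw [EuclideanSpace.real_norm_sq_eq]
  simp [dotProduct, sq]

lemma posSemidef_self_mul_transpose {m ι : Type*} [Finite m] [Fintype ι] (B : Matrix m ι ℝ) :
    (B * Bᵀ).PosSemidef := by
  simpa [conjTranspose_eq_transpose_of_trivial] using posSemidef_self_mul_conjTranspose B

section

variable {n : ℕ}

lemma opNorm_nonneg (B : Matrix (Fin n) (Fin n) ℝ) : 0 ≤ opNorm B := norm_nonneg _

lemma frobNorm_nonneg (A : Matrix (Fin n) (Fin n) ℝ) : 0 ≤ frobNorm A := Real.sqrt_nonneg _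

lemma mulVec_dotProduct_mulVec_le (C : Matrix (Fin n) (Fin n) ℝ) (x : Fin n → ℝ) :
    (C *ᵥ x) ⬝ᵥ (C *ᵥ x) ≤ opNorm C ^ 2 * (x ⬝ᵥ x) := by
  rw [← norm_toLp_sq, ← norm_toLp_sq, ← mul_pow, ← toEuclideanCLM_toLp]
  exact pow_le_pow_left₀ (norm_nonneg _) ((toEuclideanCLM (𝕜 := ℝ) C).le_opNorm _) 2

open scoped Matrix.Norms.L2Operator in
lemma opNorm_transpose (C : Matrix (Fin n) (Fin n) ℝ) : opNorm Cᵀ = opNorm C := by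
  simpa [opNorm, ← cstar_norm_def, conjTranspose_eq_transpose_of_trivial] using
    l2_opNorm_conjTranspose C

lemma frobNorm_sq (A : Matrix (Fin n) (Fin n) ℝ) : frobNorm A ^ 2 = ∑ i, A i ⬝ᵥ A i := by
  rw [frobNorm, Real.sq_sqrt (by positivity)]
  simp [dotProduct, sq]

lemma frobNorm_transpose (A : Matrix (Fin n) (Fin n) ℝ) : frobNorm Aᵀ = frobNorm A := by
  rw [frobNorm, frobNorm, Finset.sum_comm]
  rfl

lemma frobNorm_mul_sq (A B : Matrix (Fin n) (Fin n) ℝ) :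
    frobNorm (A * B) ^ 2 = ∑ i, A i ⬝ᵥ ((B * Bᵀ) *ᵥ A i) := by
  rw [frobNorm_sq]
  refine Finset.sum_congr rfl fun i _ ↦ ?_
  rw [← mulVec_mulVec, dotProduct_mulVec, mulVec_transpose]
  rfl

lemma frobNorm_le_sqrt_mul_opNorm (B : Matrix (Fin n) (Fin n) ℝ) :
    frobNorm B ≤ √n * opNorm B := by
  have hsq : frobNorm B ^ 2 ≤ (√n * opNorm B) ^ 2 := by
    rw [← frobNorm_transpose, frobNorm_sq, mul_pow, Real.sq_sqrt n.cast_nonneg]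
    calc ∑ j, Bᵀ j ⬝ᵥ Bᵀ j ≤ ∑ _j : Fin n, opNorm B ^ 2 := by
          refine Finset.sum_le_sum fun j _ ↦ ?_
          have hcol : Bᵀ j = B *ᵥ Pi.single j 1 := by rw [mulVec_single_one]; rfl
          simpa [hcol] using mulVec_dotProduct_mulVec_le B (Pi.single j 1)
      _ = n * opNorm B ^ 2 := by simp
  exact (sq_le_sq₀ (Real.sqrt_nonneg _) (mul_nonneg (Real.sqrt_nonneg _) (opNorm_nonneg B))).1 hsq

lemma eigenvalues_self_mul_transpose_le_sq_opNorm (B : Matrix (Fin n) (Fin n) ℝ)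
    (hM : (B * Bᵀ).IsHermitian) (i : Fin n) : hM.eigenvalues i ≤ opNorm B ^ 2 := by
  set v := (hM.eigenvectorBasis i).ofLp
  have hv : v ⬝ᵥ v = 1 := by
    rw [← norm_toLp_sq, WithLp.toLp_ofLp, hM.eigenvectorBasis.orthonormal.1 i, one_pow]
  calc hM.eigenvalues i = (Bᵀ *ᵥ v) ⬝ᵥ (Bᵀ *ᵥ v) := by
        rw [hM.eigenvalues_eq, ← mulVec_mulVec, dotProduct_mulVec, ← mulVec_transpose,
          RCLike.re_to_real, star_trivial]
    _ ≤ opNorm B ^ 2 := by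
        simpa [hv, opNorm_transpose] using mulVec_dotProduct_mulVec_le Bᵀ v

lemma sq_opNorm_le_sq_mul_eigenvalues {B : Matrix (Fin n) (Fin n) ℝ} {Q : ℝ}
    (h : opNorm B ^ n ≤ Q * B.det) (hM : (B * Bᵀ).PosSemidef) (i : Fin n) :
    opNorm B ^ 2 ≤ Q ^ 2 * hM.1.eigenvalues i := by
  set σ := opNorm B
  set μ := hM.1.eigenvalues
  have hdet : B.det ^ 2 ≤ μ i * (σ ^ 2) ^ (n - 1) := by
    have hprod : B.det ^ 2 = ∏ j, μ j := by
      simpa [det_mul, sq] using hM.1.det_eq_prod_eigenvalues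
    simpa [hprod] using Finset.prod_le_mul_pow_card_sub_one hM.eigenvalues_nonneg
      (eigenvalues_self_mul_transpose_le_sq_opNorm B hM.1) i
  rcases (opNorm_nonneg B : 0 ≤ σ).eq_or_lt with hσ | hσ
  · rw [show σ = 0 from hσ.symm, zero_pow two_ne_zero]
    exact mul_nonneg (sq_nonneg Q) (hM.eigenvalues_nonneg i)
  have hn : n - 1 + 1 = n := Nat.sub_add_cancel i.pos
  refine le_of_mul_le_mul_left ?_ (by positivity : 0 < (σ ^ 2) ^ (n - 1))
  calc (σ ^ 2) ^ (n - 1) * σ ^ 2 = (σ ^ n) ^ 2 := by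
        rw [← pow_succ, hn, ← pow_mul, ← pow_mul, mul_comm]
    _ ≤ (Q * B.det) ^ 2 := pow_le_pow_left₀ (by positivity) h 2
    _ ≤ Q ^ 2 * (μ i * (σ ^ 2) ^ (n - 1)) := by
        rw [mul_pow]; exact mul_le_mul_of_nonneg_left hdet (sq_nonneg Q)
    _ = (σ ^ 2) ^ (n - 1) * (Q ^ 2 * μ i) := by ring

lemma opNorm_mul_frobNorm_le {A B : Matrix (Fin n) (Fin n) ℝ} {Q : ℝ} (hQ : 0 < Q)
    (h : opNorm B ^ n ≤ Q * B.det) : opNorm B * frobNorm A ≤ Q * frobNorm (A * B) := by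
  have hM := posSemidef_self_mul_transpose B
  have hquad (x : Fin n → ℝ) : (opNorm B / Q) ^ 2 * (x ⬝ᵥ x) ≤ x ⬝ᵥ ((B * Bᵀ) *ᵥ x) :=
    hM.1.mul_dotProduct_self_le_dotProduct_mulVec (fun i ↦ by
      rw [div_pow, div_le_iff₀' (by positivity)]
      exact sq_opNorm_le_sq_mul_eigenvalues h hM i) x
  have hsq : (opNorm B / Q * frobNorm A) ^ 2 ≤ frobNorm (A * B) ^ 2 := by
    rw [mul_pow, frobNorm_sq, frobNorm_mul_sq, Finset.mul_sum]
    exact Finset.sum_le_sum fun i _ ↦ hquad (A i)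
  have := (sq_le_sq₀ (by have := opNorm_nonneg B; have := frobNorm_nonneg A; positivity)
    (frobNorm_nonneg _)).1 hsq
  rwa [div_mul_eq_mul_div, div_le_iff₀' hQ] at this

end

theorem stmt_4_general {n : ℕ} (A B : Matrix (Fin n) (Fin n) ℝ) (Q : ℝ) (hQ : 1 ≤ Q)
    (h : opNorm B ^ n ≤ Q * B.det) :
    Q⁻¹ * frobNorm A * frobNorm B / n ^ 2 ≤ frobNorm (A * B) := by
  rcases n.eq_zero_or_pos with rfl | hn
  · simpa using frobNorm_nonneg (A * B)
  have hQ₀ : 0 < Q := by linarith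
  have hsqrt : √n ≤ (n : ℝ) ^ 2 := by
    have : (1 : ℝ) ≤ n := by exact_mod_cast hn
    rw [Real.sqrt_le_iff, ← pow_mul]
    exact ⟨by positivity, le_self_pow₀ this (by norm_num)⟩
  calc Q⁻¹ * frobNorm A * frobNorm B / n ^ 2
      ≤ Q⁻¹ * frobNorm A * (√n * opNorm B) / n ^ 2 := by
        have := frobNorm_nonneg A
        gcongr
        exact frobNorm_le_sqrt_mul_opNorm B
    _ = √n / n ^ 2 * (Q⁻¹ * (opNorm B * frobNorm A)) := by ring
    _ ≤ 1 * frobNorm (A * B) := by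
        refine mul_le_mul (div_le_one_of_le₀ hsqrt (by positivity)) ?_
          (by have := opNorm_nonneg B; have := frobNorm_nonneg A; positivity) zero_le_one
        rw [inv_mul_le_iff₀ hQ₀]
        exact opNorm_mul_frobNorm_le hQ₀ h
    _ = frobNorm (A * B) := one_mul _

/-- Matrices of bounded dilatation cannot collapse the Frobenius norm of products
by more than a factor Q·n². -/
theorem stmt_4 {n : ℕ} (A B : Matrix (Fin n) (Fin n) ℝ) (Q : ℝ) (hQ : 1 ≤ Q)
    (hdet : 0 < B.det) (h : opNorm B ^ n ≤ Q * B.det) :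
    Q⁻¹ * frobNorm A * frobNorm B / n ^ 2 ≤ frobNorm (A * B) :=
  stmt_4_general A B Q hQ h
end

section
/- Define u : (-1,1)² → ℝ² by u(x₁,x₂) = (x₁, x₂x₁) if x₁ > 0 and u(x₁,x₂) = (x₁, −x₂x₁) if x₁ ≤ 0, and for fixed θ ∈ (0, 2π) define v : (-1,1)² → ℝ² by v(x₁,x₂) = (x₁cos θ − x₁x₂ sin θ, x₁ sin θ + x₁x₂ cos θ) if x₁ > 0 and v(x₁,x₂) = (x₁, −x₂x₁) if x₁ ≤ 0. Then (a) (∇u)ᵀ∇u = (∇v)ᵀ∇v almost everywhere on (-1,1)², and (b) there is no R ∈ SO(2) such that ∇v = R·∇u almost everywhere on (-1,1)². -/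
open Matrix MeasureTheory

/-- The a.e. Jacobian matrix of a map ℝ² → ℝ². -/
noncomputable def Jac (f : (Fin 2 → ℝ) → (Fin 2 → ℝ)) (x : Fin 2 → ℝ) :
    Matrix (Fin 2) (Fin 2) ℝ :=
  LinearMap.toMatrix' (fderiv ℝ f x).toLinearMap

/-- The bow-tie map u of Example 1. -/
noncomputable def uEx (x : Fin 2 → ℝ) : Fin 2 → ℝ :=
  if 0 < x 0 then ![x 0, x 1 * x 0] else ![x 0, -(x 1 * x 0)]

/-- The map v of Example 1, rotating the right half of the bow tie by θ. -/
noncomputable def vEx (θ : ℝ) (x : Fin 2 → ℝ) : Fin 2 → ℝ :=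
  if 0 < x 0 then
    ![x 0 * Real.cos θ - x 0 * x 1 * Real.sin θ,
      x 0 * Real.sin θ + x 0 * x 1 * Real.cos θ]
  else ![x 0, -(x 1 * x 0)]

/-- The open unit square (-1,1)². -/
def Q1 : Set (Fin 2 → ℝ) := Set.univ.pi fun _ => Set.Ioo (-1 : ℝ) 1

noncomputable def clm (M : Matrix (Fin 2) (Fin 2) ℝ) : (Fin 2 → ℝ) →L[ℝ] (Fin 2 → ℝ) :=
  LinearMap.toContinuousLinearMap (Matrix.toLin' M)

lemma Jac_eq {f : (Fin 2 → ℝ) → (Fin 2 → ℝ)} {M : Matrix (Fin 2) (Fin 2) ℝ}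
    {x : Fin 2 → ℝ} (h : HasFDerivAt f (clm M) x) : Jac f x = M := by
  rw [Jac, h.fderiv]
  exact LinearMap.toMatrix'_toLin' M

lemma hasF_comp (α β : ℝ) (x : Fin 2 → ℝ) :
    HasFDerivAt (fun y : Fin 2 → ℝ => α * y 0 + β * (y 1 * y 0))
      (α • ContinuousLinearMap.proj (R := ℝ) (φ := fun _ : Fin 2 => ℝ) 0 +
        β • (x 1 • ContinuousLinearMap.proj (R := ℝ) (φ := fun _ : Fin 2 => ℝ) 0 +
          x 0 • ContinuousLinearMap.proj (R := ℝ) (φ := fun _ : Fin 2 => ℝ) 1)) x := by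
  have h0 : HasFDerivAt (fun y : Fin 2 → ℝ => y 0)
      (ContinuousLinearMap.proj (R := ℝ) (φ := fun _ : Fin 2 => ℝ) 0) x :=
    (ContinuousLinearMap.proj (R := ℝ) (φ := fun _ : Fin 2 => ℝ) 0).hasFDerivAt
  have h1 : HasFDerivAt (fun y : Fin 2 → ℝ => y 1)
      (ContinuousLinearMap.proj (R := ℝ) (φ := fun _ : Fin 2 => ℝ) 1) x :=
    (ContinuousLinearMap.proj (R := ℝ) (φ := fun _ : Fin 2 => ℝ) 1).hasFDerivAt
  exact (h0.const_mul α).add ((h1.mul h0).const_mul β)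

lemma genBranch (α β γ δ : ℝ) (x : Fin 2 → ℝ) :
    HasFDerivAt (fun y : Fin 2 → ℝ =>
        ![α * y 0 + β * (y 1 * y 0), γ * y 0 + δ * (y 1 * y 0)])
      (clm !![α + β * x 1, β * x 0; γ + δ * x 1, δ * x 0]) x := by
  apply hasFDerivAt_pi''
  intro i
  fin_cases i
  · refine (hasF_comp α β x).congr_fderiv ?_
    ext v
    simp [clm, Matrix.toLin'_apply, Matrix.mulVec, dotProduct, Fin.sum_univ_two]
    ring
  · refine (hasF_comp γ δ x).congr_fderiv ?_
    ext v
    simp [clm, Matrix.toLin'_apply, Matrix.mulVec, dotProduct, Fin.sum_univ_two]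
    ring

lemma isOpen_pos : IsOpen {y : Fin 2 → ℝ | 0 < y 0} :=
  isOpen_lt continuous_const (continuous_apply 0)

lemma isOpen_neg : IsOpen {y : Fin 2 → ℝ | y 0 < 0} :=
  isOpen_lt (continuous_apply 0) continuous_const

lemma Jac_u_pos {x : Fin 2 → ℝ} (hx : 0 < x 0) :
    Jac uEx x = !![1, 0; x 1, x 0] := by
  have hEq : uEx =ᶠ[nhds x] (fun y : Fin 2 → ℝ =>
      ![1 * y 0 + 0 * (y 1 * y 0), 0 * y 0 + 1 * (y 1 * y 0)]) :=
    Filter.eventuallyEq_of_mem (isOpen_pos.mem_nhds hx) (fun y hy => by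
      rw [uEx, if_pos (show (0:ℝ) < y 0 from hy)]
      funext i; fin_cases i <;> simp)
  rw [Jac_eq ((genBranch 1 0 0 1 x).congr_of_eventuallyEq hEq)]
  norm_num

lemma Jac_u_neg {x : Fin 2 → ℝ} (hx : x 0 < 0) :
    Jac uEx x = !![1, 0; -(x 1), -(x 0)] := by
  have hEq : uEx =ᶠ[nhds x] (fun y : Fin 2 → ℝ =>
      ![1 * y 0 + 0 * (y 1 * y 0), 0 * y 0 + (-1) * (y 1 * y 0)]) :=
    Filter.eventuallyEq_of_mem (isOpen_neg.mem_nhds hx) (fun y hy => by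
      rw [uEx, if_neg (not_lt.mpr (le_of_lt (show y 0 < 0 from hy)))]
      funext i; fin_cases i <;> simp)
  rw [Jac_eq ((genBranch 1 0 0 (-1) x).congr_of_eventuallyEq hEq)]
  ext i j; fin_cases i <;> fin_cases j <;> (all_goals try simp) <;> (all_goals try ring)

lemma Jac_v_pos {θ : ℝ} {x : Fin 2 → ℝ} (hx : 0 < x 0) :
    Jac (vEx θ) x = !![Real.cos θ - x 1 * Real.sin θ, -(x 0 * Real.sin θ);
                      Real.sin θ + x 1 * Real.cos θ, x 0 * Real.cos θ] := by
  have hEq : vEx θ =ᶠ[nhds x] (fun y : Fin 2 → ℝ =>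
      ![Real.cos θ * y 0 + (-Real.sin θ) * (y 1 * y 0),
        Real.sin θ * y 0 + Real.cos θ * (y 1 * y 0)]) :=
    Filter.eventuallyEq_of_mem (isOpen_pos.mem_nhds hx) (fun y hy => by
      rw [vEx, if_pos (show (0:ℝ) < y 0 from hy)]
      funext i; fin_cases i <;> (all_goals try simp) <;> (all_goals try ring))
  rw [Jac_eq ((genBranch (Real.cos θ) (-Real.sin θ) (Real.sin θ) (Real.cos θ) x).congr_of_eventuallyEq hEq)]
  ext i j; fin_cases i <;> fin_cases j <;> (all_goals try simp) <;> (all_goals try ring)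

lemma Jac_v_neg {θ : ℝ} {x : Fin 2 → ℝ} (hx : x 0 < 0) :
    Jac (vEx θ) x = Jac uEx x := by
  unfold Jac
  congr 2
  apply Filter.EventuallyEq.fderiv_eq
  exact Filter.eventuallyEq_of_mem (isOpen_neg.mem_nhds hx) (fun y hy => by
    have h := not_lt.mpr (le_of_lt (show y 0 < 0 from hy))
    rw [vEx, uEx, if_neg h, if_neg h])

lemma null_x0 : volume {x : Fin 2 → ℝ | x 0 = 0} = 0 := by
  have h : {x : Fin 2 → ℝ | x 0 = 0} =
      Set.pi Set.univ (fun i => if i = 0 then ({0} : Set ℝ) else Set.univ) := by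
    ext x
    simp only [Set.mem_setOf_eq, Set.mem_pi, Set.mem_univ, forall_true_left]
    constructor
    · intro hx i; fin_cases i <;> simp [hx]
    · intro hx; have := hx 0; simpa using this
  rw [h, volume_pi_pi, Fin.prod_univ_two]
  simp

lemma isOpen_Q1 : IsOpen Q1 :=
  isOpen_set_pi Set.finite_univ (fun _ _ => isOpen_Ioo)

lemma ae_ne : ∀ᵐ x : Fin 2 → ℝ, x 0 ≠ 0 := by
  rw [MeasureTheory.ae_iff]
  simpa using null_x0

lemma partA_pos (θ : ℝ) (x : Fin 2 → ℝ) (hx : 0 < x 0) :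
    (Jac uEx x)ᵀ * Jac uEx x = (Jac (vEx θ) x)ᵀ * Jac (vEx θ) x := by
  rw [Jac_u_pos hx, Jac_v_pos hx]
  have hsc := Real.sin_sq_add_cos_sq θ
  ext i j
  fin_cases i <;> fin_cases j <;>
    simp [Matrix.mul_apply, Matrix.transpose_apply, Fin.sum_univ_two,
      Matrix.vecHead, Matrix.vecTail]
  · linear_combination (-1 - x 1 * x 1) * hsc
  · linear_combination (-(x 1 * x 0)) * hsc
  · linear_combination (-(x 1 * x 0)) * hsc
  · linear_combination (-(x 0 * x 0)) * hsc

lemma exists_point {P : (Fin 2 → ℝ) → Prop} (S : Set (Fin 2 → ℝ))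
    (hS : IsOpen S) (hSne : S.Nonempty) (hSQ : S ⊆ Q1)
    (hae : ∀ᵐ x : Fin 2 → ℝ, x ∈ Q1 → P x) : ∃ x ∈ S, P x := by
  by_contra h
  push_neg at h
  have hsub : S ⊆ {x : Fin 2 → ℝ | ¬(x ∈ Q1 → P x)} := fun x hx => by
    simp only [Set.mem_setOf_eq, Classical.not_imp]
    exact ⟨hSQ hx, h x hx⟩
  have h0 : volume {x : Fin 2 → ℝ | ¬(x ∈ Q1 → P x)} = 0 := by
    rw [MeasureTheory.ae_iff] at hae; exact hae
  exact absurd (measure_mono_null hsub h0) (hS.measure_pos volume hSne).ne'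

/-- Example 1: (∇u)ᵀ∇u = (∇v)ᵀ∇v a.e. on (-1,1)², yet there is no R ∈ SO(2) with
∇v = R·∇u a.e. -/
theorem stmt_11 (θ : ℝ) (hθ : θ ∈ Set.Ioo 0 (2 * Real.pi)) :
    (∀ᵐ x : Fin 2 → ℝ, x ∈ Q1 →
        (Jac uEx x)ᵀ * Jac uEx x = (Jac (vEx θ) x)ᵀ * Jac (vEx θ) x) ∧
    ¬ ∃ R : Matrix (Fin 2) (Fin 2) ℝ, (Rᵀ * R = 1 ∧ R.det = 1) ∧
        ∀ᵐ x : Fin 2 → ℝ, x ∈ Q1 → Jac (vEx θ) x = R * Jac uEx x := by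
  constructor
  · filter_upwards [ae_ne] with x hx _
    rcases hx.lt_or_gt with h | h
    · rw [Jac_v_neg h]
    · exact partA_pos θ x h
  · rintro ⟨R, -, hae⟩
    -- left point: get R 1 1 = 1
    have hleft : ∃ x ∈ (Q1 ∩ {y : Fin 2 → ℝ | y 0 < 0}),
        Jac (vEx θ) x = R * Jac uEx x := by
      apply exists_point _ (isOpen_Q1.inter isOpen_neg) _ Set.inter_subset_left hae
      refine ⟨![-(1/2), 0], ?_, ?_⟩
      · intro i _; fin_cases i <;> norm_num
      · show (![-(1/2), 0] : Fin 2 → ℝ) 0 < 0; norm_num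
    obtain ⟨q, ⟨-, hq0⟩, hq⟩ := hleft
    have hq0 : q 0 < 0 := hq0
    rw [Jac_v_neg hq0, Jac_u_neg hq0] at hq
    have h11 := congrFun (congrFun hq 1) 1
    simp [Matrix.mul_apply, Fin.sum_univ_two, Matrix.vecHead, Matrix.vecTail] at h11
    have hR11 : R 1 1 = 1 := by
      have hq0' : q 0 ≠ 0 := ne_of_lt hq0
      have : (R 1 1 - 1) * q 0 = 0 := by linarith
      rcases mul_eq_zero.mp this with h | h
      · linarith
      · exact absurd h hq0'
    -- right point: get cos θ = 1
    have hright : ∃ x ∈ (Q1 ∩ {y : Fin 2 → ℝ | 0 < y 0}),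
        Jac (vEx θ) x = R * Jac uEx x := by
      apply exists_point _ (isOpen_Q1.inter isOpen_pos) _ Set.inter_subset_left hae
      refine ⟨![1/2, 0], ?_, ?_⟩
      · intro i _; fin_cases i <;> norm_num
      · show (0:ℝ) < (![1/2, 0] : Fin 2 → ℝ) 0; norm_num
    obtain ⟨p, ⟨-, hp0⟩, hp⟩ := hright
    have hp0 : 0 < p 0 := hp0
    rw [Jac_v_pos hp0, Jac_u_pos hp0] at hp
    have h11p := congrFun (congrFun hp 1) 1
    simp [Matrix.mul_apply, Fin.sum_univ_two, Matrix.vecHead, Matrix.vecTail, hR11] at h11p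
    have hcos : Real.cos θ = 1 := by
      have hp0' : p 0 ≠ 0 := ne_of_gt hp0
      have : (Real.cos θ - 1) * p 0 = 0 := by linarith
      rcases mul_eq_zero.mp this with h | h
      · linarith
      · exact absurd h hp0'
    obtain ⟨hθ1, hθ2⟩ := hθ
    have := Real.cos_eq_one_iff_of_lt_of_lt (by linarith [Real.pi_pos] : -(2 * Real.pi) < θ) hθ2
    rw [this] at hcos
    linarith
end

section
/- Let δ > 0 and let w : [0, δ] → [0, ∞) be absolutely continuous and nondecreasing with w(0) = 0 and w(z) > 0 on (0, δ]. Then it is impossible that both ∫₀^δ 1/w(z) dz < ∞ and ∫₀^δ (w′(z))²/w(z) dz < ∞. -/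
/-!
The point is that `∫₀^δ w′/w = ∞`: whenever `w` halves, from `w x` at `x` down to `w y = w x / 2`
at some `y < x` (intermediate value theorem), the integral of `w′/w` over `(y, x]` is at least
`(w x - w y) / w x = 1/2`, and since `w(0) = 0` this halving can be repeated indefinitely.
On the other hand `w′/w ≤ (w′)²/w + 1/w` pointwise (as `a ≤ a² + 1`), so finiteness of both
integrals would make `∫₀^δ w′/w` finite.
-/

open MeasureTheory Set
open scoped ENNReal

theorem ENNReal.ofReal_div_le_ofReal_sq_div_add_ofReal_one_div (a : ℝ) {c : ℝ} (hc : 0 ≤ c) :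
    ENNReal.ofReal (a / c) ≤ ENNReal.ofReal (a ^ 2 / c) + ENNReal.ofReal (1 / c) :=
  calc ENNReal.ofReal (a / c) ≤ ENNReal.ofReal (a ^ 2 / c + 1 / c) := by
        gcongr
        rw [← add_div]
        exact div_le_div_of_nonneg_right (by nlinarith [sq_nonneg (a - 1)]) hc
    _ ≤ _ := ENNReal.ofReal_add_le

section Measure

variable {α : Type*} [MeasurableSpace α] {μ : Measure α} {s : Set α} {f g : α → ℝ}

theorem lintegral_ofReal_div_le_lintegral_sq_div_add_lintegral_inv (hs : MeasurableSet s)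
    (hf : AEMeasurable f (μ.restrict s)) (hg : AEMeasurable g (μ.restrict s))
    (hg_nonneg : ∀ x ∈ s, 0 ≤ g x) :
    ∫⁻ x in s, ENNReal.ofReal (f x / g x) ∂μ ≤
      (∫⁻ x in s, ENNReal.ofReal (f x ^ 2 / g x) ∂μ) + ∫⁻ x in s, ENNReal.ofReal (1 / g x) ∂μ :=
  calc ∫⁻ x in s, ENNReal.ofReal (f x / g x) ∂μ
      ≤ ∫⁻ x in s, ENNReal.ofReal (f x ^ 2 / g x) + ENNReal.ofReal (1 / g x) ∂μ :=
        setLIntegral_mono' hs fun x hx =>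
          ENNReal.ofReal_div_le_ofReal_sq_div_add_ofReal_one_div (f x) (hg_nonneg x hx)
    _ = _ := lintegral_add_left' (ENNReal.measurable_ofReal.comp_aemeasurable
        ((hf.pow_const 2).div hg)) _

theorem ofReal_setIntegral_div_le_lintegral_div (hs : MeasurableSet s) {M : ℝ}
    (hf : IntegrableOn f s μ) (hf_nonneg : ∀ᵐ x ∂μ.restrict s, 0 ≤ f x)
    (hg_pos : ∀ x ∈ s, 0 < g x) (hg_le : ∀ x ∈ s, g x ≤ M) :
    ENNReal.ofReal ((∫ x in s, f x ∂μ) / M) ≤ ∫⁻ x in s, ENNReal.ofReal (f x / g x) ∂μ := by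
  have hM : ∀ x ∈ s, 0 < M := fun x hx => (hg_pos x hx).trans_le (hg_le x hx)
  rw [← integral_div, ofReal_integral_eq_lintegral_ofReal (hf.div_const M)]
  · refine lintegral_mono_ae ?_
    filter_upwards [hf_nonneg, ae_restrict_mem hs] with x hfx hx
    exact ENNReal.ofReal_le_ofReal (div_le_div_of_nonneg_left hfx (hg_pos x hx) (hg_le x hx))
  · filter_upwards [hf_nonneg, ae_restrict_mem hs] with x hfx hx
    exact div_nonneg hfx (hM x hx).le

end Measure

section Primitive

variable {δ : ℝ} {f w : ℝ → ℝ}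

theorem setIntegral_Ioc_eq_sub_of_eq_primitive (hf : IntegrableOn f (Ioc 0 δ))
    (hw : ∀ z ∈ Icc 0 δ, w z = ∫ t in Ioc 0 z, f t) {a b : ℝ} (ha : 0 ≤ a) (hab : a ≤ b)
    (hb : b ≤ δ) :
    ∫ t in Ioc a b, f t = w b - w a := by
  rw [hw a ⟨ha, hab.trans hb⟩, hw b ⟨ha.trans hab, hb⟩, ← Ioc_union_Ioc_eq_Ioc ha hab,
    setIntegral_union (Ioc_disjoint_Ioc_of_le le_rfl) measurableSet_Ioc
      (hf.mono_set (Ioc_subset_Ioc le_rfl (hab.trans hb))) (hf.mono_set (Ioc_subset_Ioc ha hb)),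
    add_sub_cancel_left]

theorem continuousOn_of_eq_primitive (hf : IntegrableOn f (Ioc 0 δ))
    (hw : ∀ z ∈ Icc 0 δ, w z = ∫ t in Ioc 0 z, f t) :
    ContinuousOn w (Icc 0 δ) :=
  (intervalIntegral.continuousOn_primitive
    ((integrableOn_Icc_iff_integrableOn_Ioc).mpr hf)).congr hw

theorem monotoneOn_of_eq_primitive (hf : IntegrableOn f (Ioc 0 δ))
    (hf_nonneg : ∀ᵐ z ∂volume.restrict (Ioc 0 δ), 0 ≤ f z)
    (hw : ∀ z ∈ Icc 0 δ, w z = ∫ t in Ioc 0 z, f t) :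
    MonotoneOn w (Icc 0 δ) := by
  intro a ha b hb hab
  have h_int : 0 ≤ ∫ t in Ioc a b, f t :=
    integral_nonneg_of_ae
      (ae_restrict_of_ae_restrict_of_subset (Ioc_subset_Ioc ha.1 hb.2) hf_nonneg)
  rw [setIntegral_Ioc_eq_sub_of_eq_primitive hf hw ha.1 hab hb.2] at h_int
  linarith

theorem exists_half_le_lintegral_div_of_eq_primitive (hf : IntegrableOn f (Ioc 0 δ))
    (hf_nonneg : ∀ᵐ z ∂volume.restrict (Ioc 0 δ), 0 ≤ f z)
    (hw : ∀ z ∈ Icc 0 δ, w z = ∫ t in Ioc 0 z, f t) (hw_pos : ∀ z ∈ Ioc 0 δ, 0 < w z)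
    {x : ℝ} (hx : x ∈ Ioc 0 δ) :
    ∃ y ∈ Ioo 0 x, 2⁻¹ ≤ ∫⁻ z in Ioc y x, ENNReal.ofReal (f z / w z) := by
  have hw_zero : w 0 = 0 := by simp [hw 0 ⟨le_rfl, hx.1.le.trans hx.2⟩]
  have hwx := hw_pos x hx
  obtain ⟨y, hy, hwy⟩ := intermediate_value_Ioo hx.1.le
    ((continuousOn_of_eq_primitive hf hw).mono (Icc_subset_Icc_right hx.2))
    (show w x / 2 ∈ Ioo (w 0) (w x) from ⟨by rw [hw_zero]; exact half_pos hwx, half_lt_self hwx⟩)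
  have h_int : ∫ t in Ioc y x, f t = w x / 2 := by
    rw [setIntegral_Ioc_eq_sub_of_eq_primitive hf hw hy.1.le hy.2.le hx.2, hwy]
    ring
  refine ⟨y, hy, ?_⟩
  calc (2⁻¹ : ℝ≥0∞) = ENNReal.ofReal ((∫ t in Ioc y x, f t) / w x) := by
        rw [h_int, div_div_cancel_left' hwx.ne', ENNReal.ofReal_inv_of_pos two_pos,
          ENNReal.ofReal_ofNat]
    _ ≤ _ := ofReal_setIntegral_div_le_lintegral_div measurableSet_Ioc
        (hf.mono_set (Ioc_subset_Ioc hy.1.le hx.2))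
        (ae_restrict_of_ae_restrict_of_subset (Ioc_subset_Ioc hy.1.le hx.2) hf_nonneg)
        (fun z hz => hw_pos z ⟨hy.1.trans hz.1, hz.2.trans hx.2⟩)
        (fun z hz => monotoneOn_of_eq_primitive hf hf_nonneg hw
          ⟨(hy.1.trans hz.1).le, hz.2.trans hx.2⟩ ⟨hx.1.le, hx.2⟩ hz.2)

theorem lintegral_div_eq_top_of_eq_primitive (hδ : 0 < δ) (hf : IntegrableOn f (Ioc 0 δ))
    (hf_nonneg : ∀ᵐ z ∂volume.restrict (Ioc 0 δ), 0 ≤ f z)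
    (hw : ∀ z ∈ Icc 0 δ, w z = ∫ t in Ioc 0 z, f t) (hw_pos : ∀ z ∈ Ioc 0 δ, 0 < w z) :
    ∫⁻ z in Ioc 0 δ, ENNReal.ofReal (f z / w z) = ⊤ := by
  have h_halvings : ∀ n : ℕ, ∃ x ∈ Ioc 0 δ,
      (n : ℝ≥0∞) * 2⁻¹ ≤ ∫⁻ z in Ioc x δ, ENNReal.ofReal (f z / w z) := by
    intro n
    induction n with
    | zero => exact ⟨δ, ⟨hδ, le_rfl⟩, by simp⟩
    | succ n ih =>
      obtain ⟨x, hx, hn⟩ := ih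
      obtain ⟨y, hy, hyx⟩ := exists_half_le_lintegral_div_of_eq_primitive hf hf_nonneg hw hw_pos hx
      refine ⟨y, ⟨hy.1, hy.2.le.trans hx.2⟩, ?_⟩
      rw [← Ioc_union_Ioc_eq_Ioc hy.2.le hx.2,
        lintegral_union measurableSet_Ioc (Ioc_disjoint_Ioc_of_le le_rfl)]
      calc ((n + 1 : ℕ) : ℝ≥0∞) * 2⁻¹ = 2⁻¹ + n * 2⁻¹ := by push_cast; ring
        _ ≤ _ := add_le_add hyx hn
  refine ENNReal.eq_top_of_forall_nnreal_le fun r => ?_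
  obtain ⟨n, hn⟩ := exists_nat_ge r
  obtain ⟨x, hx, h_le⟩ := h_halvings (2 * n)
  calc (r : ℝ≥0∞) ≤ n := mod_cast hn
    _ = ((2 * n : ℕ) : ℝ≥0∞) * 2⁻¹ := by
      push_cast
      rw [mul_comm, ← mul_assoc, ENNReal.inv_mul_cancel two_ne_zero ENNReal.ofNat_ne_top, one_mul]
    _ ≤ _ := h_le
    _ ≤ _ := lintegral_mono_set (Ioc_subset_Ioc_left hx.1.le)

end Primitive

/-- If w is absolutely continuous and nondecreasing on [0, δ] (with a.e. derivative
f ≥ 0, so that w(z) = ∫₀^z f), w(0) = 0 and w > 0 on (0, δ], then ∫₀^δ 1/w and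
∫₀^δ (w′)²/w cannot both be finite. -/
theorem stmt_14 (δ : ℝ) (hδ : 0 < δ) (w f : ℝ → ℝ)
    (hf_int : IntegrableOn f (Set.Ioc 0 δ))
    (hf_nonneg : ∀ᵐ z ∂(volume.restrict (Set.Ioc 0 δ)), 0 ≤ f z)
    (hw : ∀ z ∈ Set.Icc 0 δ, w z = ∫ t in Set.Ioc 0 z, f t)
    (hw_pos : ∀ z ∈ Set.Ioc 0 δ, 0 < w z) :
    ¬ ((∫⁻ z in Set.Ioc 0 δ, ENNReal.ofReal (1 / w z)) ≠ ⊤ ∧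
       (∫⁻ z in Set.Ioc 0 δ, ENNReal.ofReal (f z ^ 2 / w z)) ≠ ⊤) := by
  rintro ⟨h_inv, h_sq⟩
  have hw_meas : AEMeasurable w (volume.restrict (Ioc 0 δ)) :=
    ((continuousOn_of_eq_primitive hf_int hw).aemeasurable measurableSet_Icc).mono_measure
      (Measure.restrict_mono Ioc_subset_Icc_self le_rfl)
  have h_le := lintegral_ofReal_div_le_lintegral_sq_div_add_lintegral_inv measurableSet_Ioc
    hf_int.aemeasurable hw_meas fun z hz => (hw_pos z hz).le
  rw [lintegral_div_eq_top_of_eq_primitive hδ hf_int hf_nonneg hw hw_pos, top_le_iff] at h_le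
  exact ENNReal.add_ne_top.2 ⟨h_sq, h_inv⟩ h_le
end
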